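/- Fix a radius R with R > 1 and R·α_j < 1 for all 1 ≤ j ≤ t₁, and define for n, x ∈ ℤ: F_n^{α,β,γ}(x,t) = ((−1)^n/(2πi))∮_{|w|=R} (1−w)^{-n} · w^{-(x-n+1)} · f_{α,β,γ}(w,t) dw. Then for all n, x ∈ ℤ the series Σ_{y ≥ x} F_n^{α,β,γ}(y,t) converges absolutely and F_{n+1}^{α,β,γ}(x,t) = Σ_{y ≥ x} F_n^{α,β,γ}(y,t). -/

import Mathlib

/-!
Put `g(w) = (1 - w)^(-n) w^(-(x-n)) f(w)`. Expanding `w^(-k-1)` shows that `(-1)^n F_n(x + k)` is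
the `k`-th term of the Cauchy power series of `g` on the circle `|w| = R`, evaluated at the point
`1`. As `|1| < R`, this series converges absolutely to `(2πi)⁻¹ ∮ g(w) / (w - 1) dw`, and
`1 / (w - 1) = -(1 - w)⁻¹` turns that integral into `(-1)^n F_{n+1}(x)`.
-/

/-- `(1/(2πi)) ∮_{|w|=R} F(w) dw`, the normalized contour integral over the
positively oriented circle of radius `R` centered at `0` in `ℂ`. -/
noncomputable def cInt (R : ℝ) (F : ℂ → ℂ) : ℂ :=
  (2 * (Real.pi : ℂ) * Complex.I)⁻¹ * ∮ w in C(0, R), F w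

/-- The function `f_{α,β,γ}(w,t) = ∏_{j=1}^{t₁} (1−α_j)/(1−α_j w) ·
∏_{j=t₁+1}^{t₁+t₂} (1+β_j w)/(1+β_j) · exp(γ t₃ (w−1))`. -/
noncomputable def fabc (t₁ t₂ : ℕ) (t₃ γ : ℝ) (α β : ℕ → ℝ) (w : ℂ) : ℂ :=
  (∏ j ∈ Finset.Icc 1 t₁, (1 - (α j : ℂ)) / (1 - (α j : ℂ) * w)) *
  (∏ j ∈ Finset.Icc (t₁ + 1) (t₁ + t₂), (1 + (β j : ℂ) * w) / (1 + (β j : ℂ))) *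
  Complex.exp ((γ : ℂ) * (t₃ : ℂ) * (w - 1))

/-- `F_n^{α,β,γ}(x,t) = ((−1)^n/(2πi))∮_{|w|=R} (1−w)^{-n} w^{-(x-n+1)}
f_{α,β,γ}(w,t) dw`, the function in the determinantal transition probability
of the mixed TASEP. -/
noncomputable def Fabc (t₁ t₂ : ℕ) (t₃ γ : ℝ) (α β : ℕ → ℝ) (R : ℝ) (n x : ℤ) : ℂ :=
  (-1 : ℂ) ^ n * cInt R (fun w =>
    (1 - w) ^ (-n) * w ^ (-(x - n + 1)) * fabc t₁ t₂ t₃ γ α β w)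

open Complex Real

section CauchyPowerSeries

variable {E : Type*} [NormedAddCommGroup E] [NormedSpace ℂ E]

theorem summable_norm_cauchyPowerSeries_apply (f : ℂ → E) (c : ℂ) {R : ℝ} {w : ℂ}
    (hw : ‖w‖ < R) : Summable fun k : ℕ => ‖cauchyPowerSeries f c R k fun _ => w‖ := by
  have hR : 0 ≤ R := (norm_nonneg w).trans hw.le
  refine (cauchyPowerSeries f c R).summable_norm_apply ?_
  rw [mem_eball_zero_iff]
  calc ‖w‖ₑ < ENNReal.ofReal R := by
        rw [← ofReal_norm]; exact (ENNReal.ofReal_lt_ofReal_iff_of_nonneg (norm_nonneg w)).2 hw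
    _ ≤ _ := by simpa [ENNReal.ofReal, Real.coe_toNNReal _ hR] using
          le_radius_cauchyPowerSeries f c R.toNNReal

end CauchyPowerSeries

theorem one_sub_mul_ne_zero_of_mem_sphere {a w : ℂ} {R : ℝ} (haR : ‖a‖ * R < 1)
    (hw : w ∈ Metric.sphere (0 : ℂ) R) : 1 - a * w ≠ 0 := by
  intro h
  have := congrArg norm (sub_eq_zero.1 h)
  rw [norm_one, norm_mul, mem_sphere_zero_iff_norm.1 hw] at this
  linarith

theorem one_sub_ne_zero_of_mem_sphere {w : ℂ} {R : ℝ} (hR : R ≠ 1)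
    (hw : w ∈ Metric.sphere (0 : ℂ) R) : 1 - w ≠ 0 := by
  refine sub_ne_zero.2 fun h => hR ?_
  rwa [← h, mem_sphere_zero_iff_norm, norm_one, eq_comm] at hw

theorem continuousOn_one_sub_zpow_mul_zpow {R : ℝ} (hR : 1 < R) (n m : ℤ) :
    ContinuousOn (fun w : ℂ => (1 - w) ^ n * w ^ m) (Metric.sphere 0 R) :=
  ((continuousOn_const.sub continuousOn_id).zpow₀ _ fun _ hw =>
    .inl (one_sub_ne_zero_of_mem_sphere hR.ne' hw)).mul
    (continuousOn_id.zpow₀ _ fun _ hw => .inl (Metric.ne_of_mem_sphere hw (one_pos.trans hR).ne'))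

theorem continuousOn_fabc (t₁ t₂ : ℕ) (t₃ γ : ℝ) (α β : ℕ → ℝ) {s : Set ℂ}
    (hs : ∀ j ∈ Finset.Icc 1 t₁, ∀ w ∈ s, 1 - (α j : ℂ) * w ≠ 0) :
    ContinuousOn (fabc t₁ t₂ t₃ γ α β) s := by
  refine ContinuousOn.mul (ContinuousOn.mul ?_ (by fun_prop)) (by fun_prop)
  exact continuousOn_finsetProd _ fun j hj => continuousOn_const.div (by fun_prop) (hs j hj)

theorem inv_pow_mul_inv_mul_zpow_neg {w : ℂ} (hw : w ≠ 0) (m : ℤ) (k : ℕ) :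
    (1 / w) ^ k * (w⁻¹ * w ^ (-m)) = w ^ (-(m + k + 1)) := by
  rw [neg_add, neg_add, zpow_add₀ hw, zpow_add₀ hw, zpow_neg_one, zpow_neg w (k : ℤ), zpow_natCast,
    one_div, inv_pow]
  ring

section Fabc

variable (t₁ t₂ : ℕ) (t₃ γ : ℝ) (α β : ℕ → ℝ) {R : ℝ}

theorem Fabc_add_natCast (hR : 0 < R) (n x : ℤ) (k : ℕ) :
    Fabc t₁ t₂ t₃ γ α β R n (x + k) = (-1) ^ n *
      cauchyPowerSeries (fun w => (1 - w) ^ (-n) * w ^ (-(x - n)) * fabc t₁ t₂ t₃ γ α β w)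
        0 R k fun _ => 1 := by
  rw [Fabc, cInt, cauchyPowerSeries_apply, smul_eq_mul]
  congr 2
  refine circleIntegral.integral_congr hR.le fun w hw => ?_
  have hw0 : w ≠ 0 := Metric.ne_of_mem_sphere hw hR.ne'
  simp only [sub_zero, smul_eq_mul]
  rw [show -(x + k - n + 1) = -(x - n + k + 1) by ring, ← inv_pow_mul_inv_mul_zpow_neg hw0]
  ring

theorem Fabc_add_one (hR : 1 < R) (n x : ℤ) :
    Fabc t₁ t₂ t₃ γ α β R (n + 1) x = (-1) ^ n *
      ((2 * π * I : ℂ)⁻¹ • ∮ w in C(0, R),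
        (w - (0 + 1))⁻¹ • ((1 - w) ^ (-n) * w ^ (-(x - n)) * fabc t₁ t₂ t₃ γ α β w)) := by
  have hR0 : 0 ≤ R := zero_le_one.trans hR.le
  rw [Fabc, cInt, smul_eq_mul, zpow_add_one₀ (neg_ne_zero.2 one_ne_zero),
    circleIntegral.integral_congr hR0 (g := fun w => -1 * ((w - (0 + 1))⁻¹ •
      ((1 - w) ^ (-n) * w ^ (-(x - n)) * fabc t₁ t₂ t₃ γ α β w))),
    circleIntegral.integral_const_mul]
  · ring
  intro w hw
  dsimp only
  rw [show -(x - (n + 1) + 1) = -(x - n) by ring, neg_add,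
    zpow_add₀ (one_sub_ne_zero_of_mem_sphere hR.ne' hw), zpow_neg_one, smul_eq_mul,
    zero_add, ← neg_sub 1 w, inv_neg]
  ring

end Fabc

theorem statement9_general (t₁ t₂ : ℕ) (t₃ γ : ℝ)
    (α β : ℕ → ℝ)
    (hα : ∀ j ∈ Finset.Icc 1 t₁, 0 ≤ α j ∧ α j < 1)
    (R : ℝ) (hR : 1 < R) (hRα : ∀ j ∈ Finset.Icc 1 t₁, R * α j < 1)
    (n x : ℤ) :
    Summable (fun k : ℕ => ‖Fabc t₁ t₂ t₃ γ α β R n (x + k)‖) ∧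
    Fabc t₁ t₂ t₃ γ α β R (n + 1) x = ∑' k : ℕ, Fabc t₁ t₂ t₃ γ α β R n (x + k) := by
  have hR0 : 0 < R := one_pos.trans hR
  set g : ℂ → ℂ := fun w => (1 - w) ^ (-n) * w ^ (-(x - n)) * fabc t₁ t₂ t₃ γ α β w
  have hg : CircleIntegrable g 0 R := by
    refine ContinuousOn.circleIntegrable hR0.le <|
      (continuousOn_one_sub_zpow_mul_zpow hR _ _).mul <|
      continuousOn_fabc t₁ t₂ t₃ γ α β fun j hj w hw => one_sub_mul_ne_zero_of_mem_sphere ?_ hw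
    rw [Complex.norm_of_nonneg (hα j hj).1, mul_comm]
    exact hRα j hj
  have h1 : ‖(1 : ℂ)‖ < R := by rwa [norm_one]
  simp_rw [Fabc_add_natCast t₁ t₂ t₃ γ α β hR0, Fabc_add_one t₁ t₂ t₃ γ α β hR, norm_mul,
    norm_zpow, norm_neg, norm_one, one_zpow, one_mul]
  exact ⟨summable_norm_cauchyPowerSeries_apply g 0 h1,
    ((hasSum_cauchyPowerSeries_integral hg h1).mul_left _).tsum_eq.symm⟩

/-- The series `Σ_{y ≥ x} F_n^{α,β,γ}(y,t)` converges absolutely and equals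
`F_{n+1}^{α,β,γ}(x,t)`. -/
theorem statement9 (t₁ t₂ : ℕ) (t₃ γ : ℝ) (ht₃ : 0 ≤ t₃) (hγ : 0 ≤ γ)
    (α β : ℕ → ℝ)
    (hα : ∀ j ∈ Finset.Icc 1 t₁, 0 ≤ α j ∧ α j < 1)
    (hβ : ∀ j ∈ Finset.Icc (t₁ + 1) (t₁ + t₂), 0 ≤ β j)
    (R : ℝ) (hR : 1 < R) (hRα : ∀ j ∈ Finset.Icc 1 t₁, R * α j < 1)
    (n x : ℤ) :
    Summable (fun k : ℕ => ‖Fabc t₁ t₂ t₃ γ α β R n (x + k)‖) ∧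
    Fabc t₁ t₂ t₃ γ α β R (n + 1) x = ∑' k : ℕ, Fabc t₁ t₂ t₃ γ α β R n (x + k) :=
  statement9_general t₁ t₂ t₃ γ α β hα R hR hRα n x
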